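/- arXiv:1309.0055 — 5 statements merged into one kernel-verified Lean document; each statement's English description precedes it below -/
import Mathlib

section
/- Let f be a real entire function admitting the representation f(z) = C·e^{−az²+bz}·∏_{k=1}^{ω}(1 − z/z_k)e^{z/z_k} (0 ≤ ω ≤ ∞, the product converging locally uniformly), where C ∈ ℝ\{0}, a ≥ 0, b ∈ ℝ, each zero z_k satisfies 0 < |z_k| and |Im z_k| ≤ 1, and ∑_k 1/|z_k|² < ∞; in particular f(0) ≠ 0. Denote the real zeros of f by {x_k} and the non-real zeros by z_j = α_j + iβ_j. If there is an interval [A, B] with B − A > 2 such that α_j ∉ [A, B] for every non-real zero, then L₁(x; f) := f′(x)² − f(x)f″(x) ≥ 0 for all x ∈ [A+1, B−1]. -/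
/-!
Write `f = e^q · P` with `q(z) = -a z² + b z` and `P` the canonical product of the factors
`E_c(z) = (1 - z c) e^{z c}`, `c = 1/z_k`. The Laguerre expression `L(g) = g'² - g g''` satisfies
`L(g h) = h² L(g) + g² L(h)`, and `L(e^q) = 2a e^{2q}`, `L(E_c) = E_c² / (1/c - z)²`. The partial
products converge locally uniformly, so by Weierstrass' theorem
`L(f)(x) / f(x)² = 2a + ∑ₖ 1/(z_k - x)²`. For `x ∈ [A+1, B-1]` every zero `z_k = α + iβ` is real
or has `|α - x| > 1 ≥ |β|`, so each `1/(z_k - x)²` has nonnegative real part; as `f(x)` is real,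
`L(f)(x) ≥ 0`.
-/

open Complex ComplexOrder Filter Finset Topology

noncomputable def weierstrassFactor (c z : ℂ) : ℂ := (1 - z * c) * exp (z * c)

noncomputable def laguerre (g : ℂ → ℂ) (z : ℂ) : ℂ := deriv g z ^ 2 - g z * deriv (deriv g) z

lemma laguerre_mul {g h : ℂ → ℂ} (hg : Differentiable ℂ g) (hh : Differentiable ℂ h) (z : ℂ) :
    laguerre (fun y => g y * h y) z = h z ^ 2 * laguerre g z + g z ^ 2 * laguerre h z := by
  have hderiv : deriv (fun y => g y * h y) = fun y => deriv g y * h y + g y * deriv h y :=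
    funext fun y => deriv_mul (hg y) (hh y)
  have hderiv2 := (((hg.deriv z).hasDerivAt.fun_mul (hh z).hasDerivAt).fun_add
    ((hg z).hasDerivAt.fun_mul (hh.deriv z).hasDerivAt)).deriv
  simp only [laguerre, hderiv, hderiv2]
  ring

lemma laguerre_const_mul_exp_quadratic (C a b z : ℂ) :
    laguerre (fun y => C * exp (-a * y ^ 2 + b * y)) z
      = 2 * a * (C * exp (-a * z ^ 2 + b * z)) ^ 2 := by
  have hq' : ∀ y, HasDerivAt (fun y => -a * (2 * y) + b) (-a * 2) y := fun y => by
    simpa using (((hasDerivAt_id y).const_mul 2).const_mul (-a)).add_const b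
  have hq : ∀ y, HasDerivAt (fun y => -a * y ^ 2 + b * y) (-a * (2 * y) + b) y := fun y => by
    simpa using ((hasDerivAt_pow 2 y).const_mul (-a)).fun_add ((hasDerivAt_id y).const_mul b)
  have hderiv : deriv (fun y => C * exp (-a * y ^ 2 + b * y))
      = fun y => C * exp (-a * y ^ 2 + b * y) * (-a * (2 * y) + b) :=
    funext fun y => (((hq y).cexp.const_mul C).congr_deriv (by ring)).deriv
  have hderiv2 := (((hq z).cexp.const_mul C).fun_mul (hq' z)).deriv
  simp only [laguerre, hderiv, hderiv2]
  ring

lemma hasDerivAt_weierstrassFactor (c z : ℂ) :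
    HasDerivAt (weierstrassFactor c) (-(z * c ^ 2) * exp (z * c)) z := by
  have hlin : HasDerivAt (fun y => y * c) c z := by simpa using hasDerivAt_mul_const c
  exact ((hlin.const_sub 1).fun_mul hlin.cexp).congr_deriv (by ring)

lemma differentiable_weierstrassFactor (c : ℂ) : Differentiable ℂ (weierstrassFactor c) :=
  fun z => (hasDerivAt_weierstrassFactor c z).differentiableAt

lemma laguerre_weierstrassFactor (c z : ℂ) :
    laguerre (weierstrassFactor c) z = c ^ 2 * exp (z * c) ^ 2 := by
  have hlin : HasDerivAt (fun y => y * c) c z := by simpa using hasDerivAt_mul_const c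
  have hderiv2 := ((hasDerivAt_mul_const (c ^ 2)).fun_neg.fun_mul hlin.cexp).deriv
  simp only [laguerre, funext fun y => (hasDerivAt_weierstrassFactor c y).deriv, hderiv2,
    weierstrassFactor]
  ring

lemma differentiable_prod_weierstrassFactor (c : ℕ → ℂ) (s : Finset ℕ) :
    Differentiable ℂ fun z => ∏ k ∈ s, weierstrassFactor (c k) z :=
  .fun_finsetProd fun _ _ => differentiable_weierstrassFactor _

lemma laguerre_prod_weierstrassFactor (c : ℕ → ℂ) {z : ℂ} (hz : ∀ k, 1 - z * c k ≠ 0) (n : ℕ) :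
    laguerre (fun y => ∏ k ∈ range n, weierstrassFactor (c k) y) z
      = (∏ k ∈ range n, weierstrassFactor (c k) z) ^ 2
        * ∑ k ∈ range n, c k ^ 2 / (1 - z * c k) ^ 2 := by
  induction n with
  | zero => simp [laguerre]
  | succ n ih =>
    simp only [prod_range_succ, sum_range_succ]
    rw [laguerre_mul (differentiable_prod_weierstrassFactor c _)
      (differentiable_weierstrassFactor _), ih, laguerre_weierstrassFactor]
    have hzn := hz n
    simp only [weierstrassFactor]
    field_simp

lemma norm_weierstrassFactor_sub_one_le {c z : ℂ} (h : ‖z * c‖ ≤ 1) :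
    ‖weierstrassFactor c z - 1‖ ≤ 3 * ‖z * c‖ ^ 2 := by
  set u := z * c
  have hexp := norm_exp_sub_one_sub_id_le h
  have hsplit : weierstrassFactor c z - 1 = (1 - u) * (exp u - 1 - u) - u ^ 2 := by
    simp only [weierstrassFactor, u]; ring
  have h1u : ‖1 - u‖ ≤ 2 := (norm_sub_le _ _).trans (by rw [norm_one]; linarith)
  calc ‖weierstrassFactor c z - 1‖ ≤ ‖1 - u‖ * ‖exp u - 1 - u‖ + ‖u‖ ^ 2 := by
        rw [hsplit]; exact (norm_sub_le _ _).trans (by rw [norm_mul, norm_pow])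
    _ ≤ 2 * ‖u‖ ^ 2 + ‖u‖ ^ 2 := by gcongr
    _ = 3 * ‖u‖ ^ 2 := by ring

lemma hasProdLocallyUniformlyOn_weierstrassFactor {c : ℕ → ℂ}
    (hc : Summable fun k => ‖c k‖ ^ 2) :
    HasProdLocallyUniformlyOn (fun k => weierstrassFactor (c k))
      (fun z => ∏' k, weierstrassFactor (c k) z) Set.univ := by
  refine hasProdLocallyUniformlyOn_of_forall_compact isOpen_univ fun K _ hK => ?_
  obtain ⟨R, hR, hKR⟩ := hK.isBounded.exists_pos_norm_le
  have hsmall : ∀ᶠ n in atTop, ‖c n‖ ^ 2 ≤ (R ^ 2)⁻¹ :=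
    hc.tendsto_atTop_zero.eventually (ge_mem_nhds (by positivity))
  have hbound :
      ∀ᶠ n in atTop, ∀ z ∈ K, ‖weierstrassFactor (c n) z - 1‖ ≤ 3 * R ^ 2 * ‖c n‖ ^ 2 := by
    filter_upwards [hsmall] with n hn z hz
    have hzc : ‖z * c n‖ ^ 2 ≤ R ^ 2 * ‖c n‖ ^ 2 := by
      rw [norm_mul, mul_pow]; gcongr; exact hKR z hz
    have hle : ‖z * c n‖ ≤ 1 := by
      refine (pow_le_one_iff_of_nonneg (norm_nonneg _) two_ne_zero).mp (hzc.trans ?_)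
      calc R ^ 2 * ‖c n‖ ^ 2 ≤ R ^ 2 * (R ^ 2)⁻¹ := by gcongr
        _ = 1 := by field_simp
    calc _ ≤ 3 * ‖z * c n‖ ^ 2 := norm_weierstrassFactor_sub_one_le hle
      _ ≤ 3 * R ^ 2 * ‖c n‖ ^ 2 := by linarith
  have hprod := (hc.mul_left (3 * R ^ 2)).hasProdUniformlyOn_nat_one_add hK hbound
    fun _ => ((differentiable_weierstrassFactor _).continuous.sub continuous_const).continuousOn
  simpa only [add_sub_cancel] using hprod

lemma TendstoLocallyUniformlyOn.tendsto_laguerre {ι : Type*} {φ : Filter ι} {F : ι → ℂ → ℂ}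
    {g : ℂ → ℂ} (hFg : TendstoLocallyUniformlyOn F g φ Set.univ)
    (hF : ∀ i, Differentiable ℂ (F i)) (z : ℂ) :
    Tendsto (fun i => laguerre (F i) z) φ (𝓝 (laguerre g z)) := by
  have h1 := hFg.deriv (.of_forall fun i => (hF i).differentiableOn) isOpen_univ
  have h2 := h1.deriv (.of_forall fun i => (hF i).deriv.differentiableOn) isOpen_univ
  have hmem := Set.mem_univ z
  exact ((h1.tendsto_at hmem).pow 2).sub ((hFg.tendsto_at hmem).mul (h2.tendsto_at hmem))

lemma differentiable_tprod_weierstrassFactor {c : ℕ → ℂ} (hc : Summable fun k => ‖c k‖ ^ 2) :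
    Differentiable ℂ fun z => ∏' k, weierstrassFactor (c k) z := by
  have hP := (hasProdLocallyUniformlyOn_weierstrassFactor hc).tendstoLocallyUniformlyOn_finsetRange
  exact differentiableOn_univ.mp <| hP.differentiableOn
    (.of_forall fun _ => (differentiable_prod_weierstrassFactor c _).differentiableOn) isOpen_univ

lemma tendsto_sum_range_laguerre_tprod_div_sq {c : ℕ → ℂ} (hc : Summable fun k => ‖c k‖ ^ 2)
    {z : ℂ} (hz : ∏' k, weierstrassFactor (c k) z ≠ 0) :
    Tendsto (fun n => ∑ k ∈ range n, c k ^ 2 / (1 - z * c k) ^ 2) atTop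
      (𝓝 (laguerre (fun y => ∏' k, weierstrassFactor (c k) y) z
        / (∏' k, weierstrassFactor (c k) z) ^ 2)) := by
  have hfactor : ∀ k, 1 - z * c k ≠ 0 := fun k hk =>
    hz (tprod_of_exists_eq_zero ⟨k, by simp [weierstrassFactor, hk]⟩)
  have hpartial : ∀ n, ∏ k ∈ range n, weierstrassFactor (c k) z ≠ 0 := fun n =>
    prod_ne_zero_iff.mpr fun k _ => mul_ne_zero (hfactor k) (exp_ne_zero _)
  have hP := (hasProdLocallyUniformlyOn_weierstrassFactor hc).tendstoLocallyUniformlyOn_finsetRange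
  have hlim := (hP.tendsto_laguerre (fun _ => differentiable_prod_weierstrassFactor c _) z).div ((hP.tendsto_at (Set.mem_univ z)).pow 2)
    (pow_ne_zero 2 hz)
  refine hlim.congr fun n => ?_
  rw [Pi.div_apply, laguerre_prod_weierstrassFactor c hfactor,
    mul_div_cancel_left₀ _ (pow_ne_zero 2 (hpartial n))]

lemma im_deriv_eq_zero_of_forall_im_eq_zero {g : ℂ → ℂ} (hg : Differentiable ℂ g)
    (h : ∀ t : ℝ, (g t).im = 0) (x : ℝ) : (deriv g x).im = 0 := by
  have hre := (hg x).hasDerivAt.comp_ofReal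
  have him : HasDerivAt (fun t : ℝ => (g t).im) (deriv g x).im x :=
    imCLM.hasFDerivAt.comp_hasDerivAt x hre
  rw [funext h] at him
  exact him.unique (hasDerivAt_const x 0)

lemma im_laguerre_eq_zero {g : ℂ → ℂ} (hg : Differentiable ℂ g) (h : ∀ t : ℝ, (g t).im = 0)
    (x : ℝ) : (laguerre g x).im = 0 := by
  have h' := im_deriv_eq_zero_of_forall_im_eq_zero hg h
  have h'' := im_deriv_eq_zero_of_forall_im_eq_zero hg.deriv h'
  simp [laguerre, sq, h x, h' x, h'' x]

lemma sq_div_one_sub_mul_sq {c : ℂ} (hc : c ≠ 0) (z : ℂ) :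
    c ^ 2 / (1 - z * c) ^ 2 = ((c⁻¹ - z) ^ 2)⁻¹ := by
  rw [show 1 - z * c = c * (c⁻¹ - z) by field_simp, mul_pow,
    div_mul_cancel_left₀ (pow_ne_zero 2 hc)]

lemma re_inv_sq_nonneg {ζ : ℂ} (h : |ζ.im| ≤ |ζ.re|) : 0 ≤ ((ζ ^ 2)⁻¹).re := by
  rw [inv_re]
  refine div_nonneg ?_ (normSq_nonneg _)
  rw [sq, mul_re, ← sq, ← sq, sub_nonneg]
  exact sq_le_sq.mpr h

lemma re_sq_div_one_sub_mul_sq_nonneg {c z : ℂ}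
    (h : c ≠ 0 → |(c⁻¹ - z).im| ≤ |(c⁻¹ - z).re|) : 0 ≤ (c ^ 2 / (1 - z * c) ^ 2).re := by
  rcases eq_or_ne c 0 with hc | hc
  · simp [hc]
  · rw [sq_div_one_sub_mul_sq hc]
    exact re_inv_sq_nonneg (h hc)

lemma abs_im_le_abs_re_inv_sub {c : ℂ} {A B x : ℝ} (hx : x ∈ Set.Icc (A + 1) (B - 1))
    (hstrip : |(c⁻¹).im| ≤ 1) (havoid : (c⁻¹).im ≠ 0 → (c⁻¹).re ∉ Set.Icc A B) :
    |(c⁻¹ - x).im| ≤ |(c⁻¹ - x).re| := by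
  simp only [sub_im, ofReal_im, sub_zero, sub_re, ofReal_re]
  by_cases h0 : (c⁻¹).im = 0
  · simp [h0]
  · have hout := havoid h0
    rw [Set.mem_Icc, not_and_or, not_le, not_le] at hout
    obtain ⟨hx1, hx2⟩ := hx
    refine hstrip.trans ?_
    rcases hout with h | h
    · rw [abs_of_neg (by linarith)]; linarith
    · rw [abs_of_pos (by linarith)]; linarith

theorem prop_2_2_general (f : ℂ → ℂ) (C a b : ℝ) (w : ℕ → ℂ) (A B : ℝ)
    (hreal : ∀ x : ℝ, (f x).im = 0)
    (ha : 0 ≤ a)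
    (hrep : ∀ z : ℂ, f z =
      (C : ℂ) * Complex.exp (-(a : ℂ) * z ^ 2 + (b : ℂ) * z) *
        ∏' k, (1 - z * w k) * Complex.exp (z * w k))
    (hstrip : ∀ k, w k ≠ 0 → |((w k)⁻¹).im| ≤ 1)
    (hsum : Summable fun k => ‖w k‖ ^ 2)
    (havoid : ∀ k, w k ≠ 0 → ((w k)⁻¹).im ≠ 0 → ((w k)⁻¹).re ∉ Set.Icc A B) :
    ∀ x : ℝ, x ∈ Set.Icc (A + 1) (B - 1) →
      0 ≤ (deriv f x) ^ 2 - f x * iteratedDeriv 2 f x := by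
  intro x hx
  set P : ℂ → ℂ := fun z => ∏' k, weierstrassFactor (w k) z
  have hPdiff : Differentiable ℂ P := differentiable_tprod_weierstrassFactor hsum
  have hf : f = fun z => (C * exp (-(a : ℂ) * z ^ 2 + b * z)) * P z := funext hrep
  have hfdiff : Differentiable ℂ f := hf ▸ (by fun_prop : Differentiable ℂ _).mul hPdiff
  rw [iteratedDeriv_succ, iteratedDeriv_one, ← laguerre, nonneg_iff]
  refine ⟨?_, (im_laguerre_eq_zero hfdiff hreal x).symm⟩
  by_cases hfx : f x = 0
  · have h' := im_deriv_eq_zero_of_forall_im_eq_zero hfdiff hreal x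
    simp [laguerre, hfx, sq, h', mul_self_nonneg]
  · have hPx : P x ≠ 0 := by rw [hf] at hfx; exact right_ne_zero_of_mul hfx
    have hρ : 0 ≤ (laguerre P x / P x ^ 2).re :=
      ge_of_tendsto
        ((continuous_re.tendsto _).comp (tendsto_sum_range_laguerre_tprod_div_sq hsum hPx))
        (.of_forall fun _ => by
          simp only [Function.comp_apply, re_sum]
          exact sum_nonneg fun k _ => re_sq_div_one_sub_mul_sq_nonneg fun hk =>
            abs_im_le_abs_re_inv_sub hx (hstrip k hk) (havoid k hk))
    have hL : laguerre f x = f x ^ 2 * (2 * a + laguerre P x / P x ^ 2) := by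
      rw [hf, laguerre_mul (by fun_prop) hPdiff, laguerre_const_mul_exp_quadratic]
      field_simp
    obtain ⟨r, hr⟩ : ∃ r : ℝ, f x = r := ⟨(f x).re, ext rfl (hreal x)⟩
    rw [hL, hr, ← ofReal_pow, re_ofReal_mul]
    refine mul_nonneg (sq_nonneg r) ?_
    have h2a : (2 * (a : ℂ)).re = 2 * a := by simp
    rw [add_re, h2a]
    linarith

/-- **Proposition 2.2.** Let `f` be a real entire function with the representation
`f(z) = C·e^{−az²+bz}·∏ₖ (1 − z/zₖ)e^{z/zₖ}` where `C ≠ 0`, `a ≥ 0`, `b ∈ ℝ`, the zeros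
`zₖ` (recorded via their reciprocals `w k = 1/zₖ`, with `w k = 0` allowed so that the
product may be finite) satisfy `|Im zₖ| ≤ 1` and `∑ 1/|zₖ|² < ∞`.  If there is an interval
`[A, B]` with `B − A > 2` avoided by the real parts of all non-real zeros, then
`L₁(x; f) = f′(x)² − f(x)f″(x) ≥ 0` for all `x ∈ [A+1, B−1]`. -/
theorem prop_2_2 (f : ℂ → ℂ) (C a b : ℝ) (w : ℕ → ℂ) (A B : ℝ)
    (hent : Differentiable ℂ f)
    (hreal : ∀ x : ℝ, (f x).im = 0)
    (hC : C ≠ 0) (ha : 0 ≤ a)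
    (hmul : ∀ z : ℂ, Multipliable fun k => (1 - z * w k) * Complex.exp (z * w k))
    (hrep : ∀ z : ℂ, f z =
      (C : ℂ) * Complex.exp (-(a : ℂ) * z ^ 2 + (b : ℂ) * z) *
        ∏' k, (1 - z * w k) * Complex.exp (z * w k))
    (hstrip : ∀ k, w k ≠ 0 → |((w k)⁻¹).im| ≤ 1)
    (hsum : Summable fun k => ‖w k‖ ^ 2)
    (hAB : B - A > 2)
    (havoid : ∀ k, w k ≠ 0 → ((w k)⁻¹).im ≠ 0 → ((w k)⁻¹).re ∉ Set.Icc A B) :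
    ∀ x : ℝ, x ∈ Set.Icc (A + 1) (B - 1) →
      0 ≤ (deriv f x) ^ 2 - f x * iteratedDeriv 2 f x :=
  prop_2_2_general f C a b w A B hreal ha hrep hstrip hsum havoid
end

section
/- Let f be a real entire function with f not identically zero. If Lₙ(x; f) ≥ 0 for every n ∈ ℕ₀ and every x ∈ ℝ, then every zero of f in the complex plane is real. -/
/-!
For real `x` and complex `h`, the Cauchy product of the Taylor series of `f` at `x` gives
`f (x - h) * f (x + h) = ∑ₙ Lₙ(x; f) (-h²)ⁿ`; the odd coefficients cancel under `j ↦ n - j`.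
If `f (x + y i) = 0` with `y ≠ 0`, take `h = y i`: the series `∑ₙ Lₙ(x; f) y²ⁿ` has nonnegative
terms and sum `0`, so every `Lₙ(x; f)` vanishes. Then `f (x - h) * f (x + h) = 0` for all `h`,
and by the identity theorem `f = 0`.
-/

open ComplexOrder

/-- The `n`-th generalized Laguerre expression
`Lₙ(x; f) := ∑_{j=0}^{2n} ((−1)^{j+n}/(2n)!)·C(2n,j)·f^{(j)}(x)·f^{(2n−j)}(x)`. -/
noncomputable def Lag (f : ℂ → ℂ) (n : ℕ) (x : ℂ) : ℂ :=
  ∑ j ∈ Finset.range (2 * n + 1),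
    (-1 : ℂ) ^ (j + n) / (Nat.factorial (2 * n)) * (Nat.choose (2 * n) j) *
      iteratedDeriv j f x * iteratedDeriv (2 * n - j) f x

open Complex Finset Nat

lemma neg_one_pow_sub_of_le {R : Type*} [Monoid R] [HasDistribNeg R] {j n : ℕ} (h : j ≤ n) :
    (-1 : R) ^ (n - j) = (-1) ^ (n + j) :=
  neg_one_pow_congr (by grind [Nat.even_sub])

section

variable {f : ℂ → ℂ}

noncomputable def taylorCoeff (f : ℂ → ℂ) (x : ℂ) (n : ℕ) : ℂ :=
  (n ! : ℂ)⁻¹ * iteratedDeriv n f x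

lemma hasSum_taylorCoeff (hf : Differentiable ℂ f) (x h : ℂ) :
    HasSum (fun n ↦ taylorCoeff f x n * h ^ n) (f (x + h)) := by
  have htaylor := hasSum_taylorSeries_of_entire hf x (x + h)
  simp only [add_sub_cancel_left, smul_eq_mul] at htaylor
  have e : (fun n ↦ taylorCoeff f x n * h ^ n) =
      fun n ↦ (n ! : ℂ)⁻¹ * (h ^ n * iteratedDeriv n f x) := by
    ext n
    rw [taylorCoeff]
    ring
  rw [e]
  exact htaylor

noncomputable def mirrorProductCoeff (f : ℂ → ℂ) (x : ℂ) (n : ℕ) : ℂ :=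
  ∑ j ∈ range (n + 1), (-1) ^ j * taylorCoeff f x j * taylorCoeff f x (n - j)

lemma hasSum_mirrorProductCoeff (hf : Differentiable ℂ f) (x h : ℂ) :
    HasSum (fun n ↦ mirrorProductCoeff f x n * h ^ n) (f (x - h) * f (x + h)) := by
  have hminus := hasSum_taylorCoeff hf x (-h)
  have hplus := hasSum_taylorCoeff hf x h
  rw [← sub_eq_add_neg] at hminus
  -- in finite dimension summable series are absolutely summable, so the Cauchy product applies
  have hminus_norm := summable_norm_iff.mpr hminus.summable
  have hplus_norm := summable_norm_iff.mpr hplus.summable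
  have hcauchy := hasSum_sum_range_mul_of_summable_norm hminus_norm hplus_norm
  rw [hminus.tsum_eq, hplus.tsum_eq] at hcauchy
  have e : (fun n ↦ mirrorProductCoeff f x n * h ^ n) = fun n ↦ ∑ j ∈ range (n + 1),
      taylorCoeff f x j * (-h) ^ j * (taylorCoeff f x (n - j) * h ^ (n - j)) := by
    ext n
    rw [mirrorProductCoeff, sum_mul]
    refine sum_congr rfl fun j hj ↦ ?_
    rw [neg_pow, ← pow_mul_pow_sub h (Nat.le_of_lt_succ (mem_range.mp hj))]
    ring
  rw [e]
  exact hcauchy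

lemma mirrorProductCoeff_eq_zero_of_odd (x : ℂ) {n : ℕ} (hn : Odd n) :
    mirrorProductCoeff f x n = 0 := by
  have hanti : mirrorProductCoeff f x n = -mirrorProductCoeff f x n := by
    conv_lhs => rw [mirrorProductCoeff, ← sum_range_reflect]
    rw [mirrorProductCoeff, ← sum_neg_distrib]
    refine sum_congr rfl fun j hj ↦ ?_
    have hjn : j ≤ n := Nat.le_of_lt_succ (mem_range.mp hj)
    rw [add_tsub_cancel_right, Nat.sub_sub_self hjn, neg_one_pow_sub_of_le hjn, pow_add,
      hn.neg_one_pow]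
    ring
  exact CharZero.eq_neg_self_iff.mp hanti

lemma mirrorProductCoeff_two_mul (x : ℂ) (m : ℕ) :
    mirrorProductCoeff f x (2 * m) = (-1) ^ m * Lag f m x := by
  rw [mirrorProductCoeff, Lag, mul_sum]
  refine sum_congr rfl fun j hj ↦ ?_
  have hjn : j ≤ 2 * m := Nat.le_of_lt_succ (mem_range.mp hj)
  have hsign : ((-1 : ℂ) ^ m) ^ 2 = 1 := by rw [← pow_mul, pow_mul', neg_one_sq, one_pow]
  rw [taylorCoeff, taylorCoeff, cast_choose ℂ hjn, pow_add]
  field_simp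
  rw [hsign, mul_one]

lemma hasSum_lag (hf : Differentiable ℂ f) (x h : ℂ) :
    HasSum (fun m ↦ Lag f m x * (-h ^ 2) ^ m) (f (x - h) * f (x + h)) := by
  have hodd_terms : ∀ n ∉ Set.range (2 * ·), mirrorProductCoeff f x n * h ^ n = 0 := by
    intro n hn
    have hodd : Odd n := Nat.not_even_iff_odd.mp fun ⟨k, hk⟩ ↦ hn ⟨k, show 2 * k = n by omega⟩
    rw [mirrorProductCoeff_eq_zero_of_odd x hodd, zero_mul]
  convert (mul_right_injective₀ two_ne_zero).hasSum_iff hodd_terms |>.mpr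
    (hasSum_mirrorProductCoeff hf x h) using 1
  ext m
  rw [Function.comp_apply, mirrorProductCoeff_two_mul, neg_pow, pow_mul]
  ring

lemma eq_zero_of_forall_apply_sub_mul_apply_add_eq_zero (hf : Differentiable ℂ f) {x : ℂ}
    (hx : ∀ h, f (x - h) * f (x + h) = 0) : f = 0 := by
  have hminus : Differentiable ℂ fun h ↦ f (x - h) := hf.comp (by fun_prop)
  have hplus : Differentiable ℂ fun h ↦ f (x + h) := hf.comp (by fun_prop)
  rcases AnalyticOnNhd.eq_zero_or_eq_zero_of_mul_eq_zero (fun h _ ↦ hminus.analyticAt h)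
    (fun h _ ↦ hplus.analyticAt h) (fun h _ ↦ hx h) isPreconnected_univ with h0 | h0
  · ext z
    simpa using h0 (x - z) trivial
  · ext z
    simpa using h0 (z - x) trivial

lemma lag_eq_zero_of_apply_eq_zero (hf : Differentiable ℂ f) {x y : ℝ}
    (hL : ∀ m, 0 ≤ Lag f m x) (hy : y ≠ 0) (hz : f (x + y * I) = 0) (m : ℕ) :
    Lag f m x = 0 := by
  have hsum := hasSum_lag hf x (y * I)
  have hsq : -((y : ℂ) * I) ^ 2 = (y ^ 2 : ℝ) := by
    rw [mul_pow, I_sq]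
    push_cast
    ring
  rw [hz, mul_zero, hsq] at hsum
  have hterms := (hasSum_zero_iff_of_nonneg fun m ↦ mul_nonneg (hL m)
    (pow_nonneg (zero_le_real.mpr (sq_nonneg y)) m)).mp hsum
  simpa [hy] using congrFun hterms m

end

theorem laguerre_ineq_real_zeros_general (f : ℂ → ℂ)
    (hent : Differentiable ℂ f)
    (hne : f ≠ 0)
    (hL : ∀ (n : ℕ) (x : ℝ), 0 ≤ Lag f n x) :
    ∀ z : ℂ, f z = 0 → z.im = 0 := by
  intro z hz
  by_contra hy
  have hLag : ∀ m, Lag f m z.re = 0 :=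
    lag_eq_zero_of_apply_eq_zero hent (hL · z.re) hy (by rwa [re_add_im])
  refine hne (eq_zero_of_forall_apply_sub_mul_apply_add_eq_zero hent (x := z.re) fun h ↦ ?_)
  refine (hasSum_lag hent z.re h).unique ?_
  simp [hLag]

/-- **Remark 2.5 / sufficiency direction.** If `f` is a real entire function, not
identically zero, satisfying the generalized real Laguerre inequalities
`Lₙ(x; f) ≥ 0` for every `n ∈ ℕ₀` and every `x ∈ ℝ`, then every zero of `f` in the
complex plane is real. -/
theorem laguerre_ineq_real_zeros (f : ℂ → ℂ)
    (hent : Differentiable ℂ f)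
    (hreal : ∀ x : ℝ, (f x).im = 0)
    (hne : f ≠ 0)
    (hL : ∀ (n : ℕ) (x : ℝ), 0 ≤ Lag f n x) :
    ∀ z : ℂ, f z = 0 → z.im = 0 :=
  laguerre_ineq_real_zeros_general f hent hne hL
end

section
/- Let f be a real entire function. Then for all x, y ∈ ℝ one has |f(x + iy)|² = f(x + iy)·f(x − iy) = ∑_{n=0}^{∞} Lₙ(x; f)·y^{2n}, the series converging for all real x and y. -/
open Complex ComplexConjugate Finset Filter Topology

theorem Function.Even.iteratedDeriv_eq_zero_of_odd {𝕜 : Type*} [NontriviallyNormedField 𝕜]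
    {F : Type*} [NormedAddCommGroup F] [NormedSpace 𝕜 F] [IsAddTorsionFree F] {g : 𝕜 → F}
    (hg : g.Even) {m : ℕ} (hm : Odd m) : iteratedDeriv m g 0 = 0 := by
  have h := iteratedDeriv_comp_neg m g 0
  simp only [show (fun u => g (-u)) = g from funext hg, neg_zero, hm.neg_one_pow,
    neg_one_smul] at h
  exact self_eq_neg.mp h

theorem Complex.hasSum_taylorSeries_of_entire_of_even {g : ℂ → ℂ} (hg : Differentiable ℂ g)
    (heven : g.Even) (w : ℂ) :
    HasSum (fun n => ((2 * n).factorial : ℂ)⁻¹ * iteratedDeriv (2 * n) g 0 * w ^ (2 * n))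
      (g w) := by
  have h := hasSum_taylorSeries_of_entire hg 0 w
  rw [← (mul_right_injective₀ two_ne_zero).hasSum_iff] at h
  · have hterm : (fun n : ℕ => (n.factorial : ℂ)⁻¹ • (w - 0) ^ n • iteratedDeriv n g 0) ∘ (2 * ·)
        = fun n => ((2 * n).factorial : ℂ)⁻¹ * iteratedDeriv (2 * n) g 0 * w ^ (2 * n) := by
      ext n
      simp only [Function.comp_apply, sub_zero, smul_eq_mul]
      ring
    rwa [hterm] at h
  · intro m hm
    have hodd : Odd m := by simpa [← even_iff_two_dvd, Nat.not_even_iff_odd] using hm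
    simp [heven.iteratedDeriv_eq_zero_of_odd hodd]

theorem iteratedDeriv_mul_comp_add_sub {𝕜 : Type*} [NontriviallyNormedField 𝕜] {f : 𝕜 → 𝕜}
    {m : ℕ} (hf : ContDiff 𝕜 m f) (z : 𝕜) :
    iteratedDeriv m (fun u => f (z + u) * f (z - u)) 0 =
      ∑ i ∈ range (m + 1), (-1) ^ (m - i) * m.choose i * iteratedDeriv i f z *
        iteratedDeriv (m - i) f z := by
  have hadd : ContDiff 𝕜 m fun u => f (z + u) := hf.comp (contDiff_const.add contDiff_id)
  have hsub : ContDiff 𝕜 m fun u => f (z - u) := hf.comp (contDiff_const.sub contDiff_id)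
  rw [iteratedDeriv_fun_mul hadd.contDiffAt hsub.contDiffAt]
  refine sum_congr rfl fun i _ => ?_
  rw [iteratedDeriv_comp_const_add, iteratedDeriv_comp_const_sub]
  simp only [add_zero, sub_zero, smul_eq_mul]
  ring

theorem iteratedDeriv_two_mul_mul_comp_add_sub_eq_lag {f : ℂ → ℂ} {n : ℕ}
    (hf : ContDiff ℂ (2 * n) f) (z : ℂ) :
    iteratedDeriv (2 * n) (fun u => f (z + u) * f (z - u)) 0 =
      (-1) ^ n * (2 * n).factorial * Lag f n z := by
  rw [iteratedDeriv_mul_comp_add_sub (by exact_mod_cast hf), Lag, mul_sum]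
  refine sum_congr rfl fun i hi => ?_
  have hsign : (-1 : ℂ) ^ (2 * n - i) = (-1) ^ n * (-1) ^ (i + n) := by
    rw [← pow_add, show n + (i + n) = (2 * n - i) + 2 * i by grind, pow_add, pow_mul, neg_one_sq,
      one_pow, mul_one]
  have hfact : ((2 * n).factorial : ℂ) ≠ 0 := Nat.cast_ne_zero.mpr (Nat.factorial_ne_zero _)
  rw [hsign]
  field_simp

theorem hasSum_lag_mul_pow {f : ℂ → ℂ} (hf : Differentiable ℂ f) (z w : ℂ) :
    HasSum (fun n => Lag f n z * w ^ (2 * n)) (f (z + w * I) * f (z - w * I)) := by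
  have hg : Differentiable ℂ fun u => f (z + u) * f (z - u) :=
    (hf.comp (differentiable_const z |>.add differentiable_id)).mul
      (hf.comp (differentiable_const z |>.sub differentiable_id))
  have heven : (fun u => f (z + u) * f (z - u)).Even := fun u => by
    simp only [sub_neg_eq_add, ← sub_eq_add_neg, mul_comm]
  convert hasSum_taylorSeries_of_entire_of_even hg heven (w * I) using 2 with n
  have hfact : ((2 * n).factorial : ℂ) ≠ 0 := Nat.cast_ne_zero.mpr (Nat.factorial_ne_zero _)
  rw [iteratedDeriv_two_mul_mul_comp_add_sub_eq_lag hf.contDiff z, mul_pow, pow_mul I, I_sq]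
  field_simp
  rw [← pow_mul, Even.neg_one_pow ⟨n, by ring⟩, mul_one]

theorem Differentiable.apply_conj {f : ℂ → ℂ} (hf : Differentiable ℂ f)
    (hreal : ∀ x : ℝ, (f x).im = 0) (z : ℂ) : f (conj z) = conj (f z) := by
  have hreflect : conj ∘ f ∘ conj = f := by
    have hofReal : Tendsto ((↑) : ℝ → ℂ) (𝓝[≠] 0) (𝓝[≠] 0) :=
      tendsto_nhdsWithin_iff.mpr
        ⟨tendsto_nhdsWithin_of_tendsto_nhds continuous_ofReal.continuousAt,
          eventually_nhdsWithin_of_forall fun x hx => ofReal_ne_zero.mpr hx⟩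
    have hconj : Differentiable ℂ (conj ∘ f ∘ conj) := fun z =>
      differentiableAt_conj_conj_iff.mpr (hf _)
    refine AnalyticOnNhd.eq_of_frequently_eq (z₀ := 0)
      (hconj.differentiableOn.analyticOnNhd isOpen_univ)
      (hf.differentiableOn.analyticOnNhd isOpen_univ)
      (hofReal.frequently (Frequently.of_forall fun x => ?_))
    simp [conj_eq_iff_im.mpr (hreal x)]
  simpa using (congr_fun hreflect (conj z)).symm

/-- **Formula (2.11).** For a real entire function `f` and all real `x, y`:
`|f(x + iy)|² = f(x + iy)·f(x − iy) = ∑_{n=0}^∞ Lₙ(x; f)·y^{2n}`,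
the series converging for all real `x` and `y`. -/
theorem abs_sq_eq_sum_laguerre (f : ℂ → ℂ)
    (hent : Differentiable ℂ f)
    (hreal : ∀ x : ℝ, (f x).im = 0) :
    ∀ x y : ℝ,
      (((‖f ((x : ℂ) + (y : ℂ) * Complex.I)‖ : ℝ) : ℂ)) ^ 2 =
          f ((x : ℂ) + (y : ℂ) * Complex.I) * f ((x : ℂ) - (y : ℂ) * Complex.I) ∧
      HasSum (fun n : ℕ => Lag f n (x : ℂ) * (y : ℂ) ^ (2 * n))
        (f ((x : ℂ) + (y : ℂ) * Complex.I) * f ((x : ℂ) - (y : ℂ) * Complex.I)) := by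
  intro x y
  have hconj : f (x - y * I) = conj (f (x + y * I)) := by
    rw [← hent.apply_conj hreal]
    simp [sub_eq_add_neg]
  exact ⟨by rw [hconj, mul_conj'], hasSum_lag_mul_pow hent x y⟩
end

section
/- Let Ḡ : [0, ∞) → ℝ be continuous, strictly decreasing, positive on (0, ∞), integrable on (0, ∞), with Ḡ(s) → 0 as s → ∞. Then for every x > 0, the integral I(x) := ∫_{0}^{∞} Ḡ(t)·sin(xt) dt satisfies I(x) > 0. -/
/-!
Pólya's argument. The substitution `u = x t` reduces to `x = 1`. On a period
`[2πk, 2πk + 2π]`, the shift `t ↦ t + π` together with `sin (t + π) = -sin t` folds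
the integral of `G t * sin t` into `∫ (G t - G (t + π)) * sin t` over the half period
where `sin ≥ 0`; this is nonnegative because `G` decreases, and positive on the first
period because it decreases strictly. Hence the integrals over `[0, 2πn]` increase
in `n`, and they converge to the integral over `(0, ∞)` because `G * sin` is
integrable there.
-/

open MeasureTheory Set Filter Topology Real intervalIntegral

section PeriodFolding

variable {G : ℝ → ℝ} {a : ℝ} {k : ℕ}

theorem IntervalIntegrable.left_half_two_pi (hG : IntervalIntegrable G volume a (a + 2 * π)) :
    IntervalIntegrable G volume a (a + π) :=
  hG.mono_set <| uIcc_subset_uIcc_left <|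
    mem_uIcc_of_le (by linarith [pi_pos]) (by linarith [pi_pos])

theorem IntervalIntegrable.right_half_two_pi (hG : IntervalIntegrable G volume a (a + 2 * π)) :
    IntervalIntegrable G volume (a + π) (a + 2 * π) :=
  hG.mono_set <| uIcc_subset_uIcc_right <|
    mem_uIcc_of_le (by linarith [pi_pos]) (by linarith [pi_pos])

theorem IntervalIntegrable.comp_add_pi_left_half_two_pi
    (hG : IntervalIntegrable G volume a (a + 2 * π)) :
    IntervalIntegrable (fun t => G (t + π)) volume a (a + π) := by
  simpa [two_mul, ← add_assoc] using hG.right_half_two_pi.comp_add_right π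

theorem integral_mul_sin_eq_integral_sub_shift_mul_sin
    (hG : IntervalIntegrable G volume a (a + 2 * π)) :
    ∫ t in a..a + 2 * π, G t * sin t = ∫ t in a..a + π, (G t - G (t + π)) * sin t := by
  have hsin {b c : ℝ} := continuous_sin.continuousOn (s := uIcc b c)
  have hshift := integral_comp_add_right (fun t => G t * sin t) π (a := a) (b := a + π)
  rw [add_assoc, ← two_mul] at hshift
  simp only [sin_add_pi, mul_neg, intervalIntegral.integral_neg] at hshift
  rw [← integral_add_adjacent_intervals (hG.left_half_two_pi.mul_continuousOn hsin)
    (hG.right_half_two_pi.mul_continuousOn hsin), ← hshift, ← sub_eq_add_neg,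
    ← integral_sub (hG.left_half_two_pi.mul_continuousOn hsin)
    (hG.comp_add_pi_left_half_two_pi.mul_continuousOn hsin)]
  simp only [sub_mul]

theorem integral_mul_sin_period_nonneg
    (hG : IntervalIntegrable G volume (k * (2 * π)) (k * (2 * π) + 2 * π))
    (hanti : AntitoneOn G (Icc (k * (2 * π)) (k * (2 * π) + 2 * π))) :
    0 ≤ ∫ t in k * (2 * π)..k * (2 * π) + 2 * π, G t * sin t := by
  have hπ := pi_pos
  rw [integral_mul_sin_eq_integral_sub_shift_mul_sin hG]
  refine integral_nonneg (by linarith) fun t ⟨hlo, hhi⟩ => mul_nonneg ?_ ?_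
  · exact sub_nonneg.2 <| hanti ⟨hlo, by linarith⟩ ⟨by linarith, by linarith⟩ (by linarith)
  · rw [← sin_sub_nat_mul_two_pi _ k]
    exact sin_nonneg_of_nonneg_of_le_pi (by linarith) (by linarith)

theorem integral_mul_sin_period_pos
    (hG : IntervalIntegrable G volume (k * (2 * π)) (k * (2 * π) + 2 * π))
    (hanti : StrictAntiOn G (Icc (k * (2 * π)) (k * (2 * π) + 2 * π))) :
    0 < ∫ t in k * (2 * π)..k * (2 * π) + 2 * π, G t * sin t := by
  have hπ := pi_pos
  have hsin := continuous_sin.continuousOn (s := uIcc (k * (2 * π)) (k * (2 * π) + π))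
  rw [integral_mul_sin_eq_integral_sub_shift_mul_sin hG]
  refine intervalIntegral_pos_of_pos_on
    ((hG.left_half_two_pi.sub hG.comp_add_pi_left_half_two_pi).mul_continuousOn hsin)
    (fun t ⟨hlo, hhi⟩ => mul_pos ?_ ?_) (by linarith)
  · exact sub_pos.2 <| hanti ⟨hlo.le, by linarith⟩ ⟨by linarith, by linarith⟩ (by linarith)
  · rw [← sin_sub_nat_mul_two_pi _ k]
    exact sin_pos_of_pos_of_lt_pi (by linarith) (by linarith)

end PeriodFolding

theorem integral_Ioi_mul_sin_pos {G : ℝ → ℝ} (hanti : StrictAntiOn G (Ici 0))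
    (hint : IntegrableOn G (Ioi 0)) : 0 < ∫ t in Ioi 0, G t * sin t := by
  have hII {a b : ℝ} (ha : 0 ≤ a) (hb : 0 ≤ b) : IntervalIntegrable G volume a b :=
    intervalIntegrable_iff.2 (hint.mono_set fun t ht => (le_min ha hb).trans_lt ht.1)
  have hperiod (n : ℕ) : IntervalIntegrable G volume (n * (2 * π)) (n * (2 * π) + 2 * π) :=
    hII (by positivity) (by positivity)
  have hanti_period (n : ℕ) : StrictAntiOn G (Icc (n * (2 * π)) (n * (2 * π) + 2 * π)) :=
    hanti.mono fun t ht => (show (0 : ℝ) ≤ n * (2 * π) by positivity).trans ht.1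
  set F : ℕ → ℝ := fun n => ∫ t in 0..n * (2 * π), G t * sin t
  have hmono : Monotone F := monotone_nat_of_le_succ fun n => by
    simp only [F, Nat.cast_succ, add_one_mul]
    rw [← integral_add_adjacent_intervals (b := n * (2 * π)) (c := n * (2 * π) + 2 * π)
      ((hII le_rfl (by positivity)).mul_continuousOn continuous_sin.continuousOn)
      ((hperiod n).mul_continuousOn continuous_sin.continuousOn)]
    exact le_add_of_nonneg_right
      (integral_mul_sin_period_nonneg (hperiod n) (hanti_period n).antitoneOn)
  have hlim : Tendsto F atTop (𝓝 (∫ t in Ioi 0, G t * sin t)) :=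
    intervalIntegral_tendsto_integral_Ioi 0
      (hint.mul_bdd continuous_sin.aestronglyMeasurable (ae_of_all _ fun t => abs_sin_le_one t))
      (tendsto_natCast_atTop_atTop.atTop_mul_const two_pi_pos)
  calc 0 < F 1 := by
        simpa [F] using integral_mul_sin_period_pos (hperiod 0) (hanti_period 0)
    _ ≤ _ := hmono.ge_of_tendsto hlim 1

theorem sine_transform_pos_general (G : ℝ → ℝ)
    (hanti : StrictAntiOn G (Set.Ici 0))
    (hint : MeasureTheory.IntegrableOn G (Set.Ioi 0)) :
    ∀ x : ℝ, 0 < x → 0 < ∫ t in Set.Ioi (0 : ℝ), G t * Real.sin (x * t) := by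
  intro x hx
  have hscale := integral_comp_mul_left_Ioi (fun u => G (x⁻¹ * u) * sin u) 0 hx
  simp only [inv_mul_cancel_left₀ hx.ne', mul_zero, smul_eq_mul] at hscale
  rw [hscale]
  refine mul_pos (inv_pos.2 hx) (integral_Ioi_mul_sin_pos ?_ ?_)
  · exact hanti.comp_strictMonoOn ((strictMono_mul_left_of_pos (inv_pos.2 hx)).strictMonoOn _)
      fun u hu => mul_nonneg (inv_nonneg.2 hx.le) hu
  · exact (integrableOn_Ioi_comp_mul_left_iff G 0 (inv_pos.2 hx)).2 (by simpa using hint)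

/-- **Remark 3.11 (Pólya's argument).** Let `Ḡ : [0, ∞) → ℝ` be continuous, strictly
decreasing, positive on `(0, ∞)`, integrable on `(0, ∞)`, with `Ḡ(s) → 0` as `s → ∞`.
Then for every `x > 0` the Fourier sine transform `I(x) := ∫₀^∞ Ḡ(t)·sin(xt) dt` is
positive. -/
theorem sine_transform_pos (G : ℝ → ℝ)
    (hcont : ContinuousOn G (Set.Ici 0))
    (hanti : StrictAntiOn G (Set.Ici 0))
    (hpos : ∀ s : ℝ, 0 < s → 0 < G s)
    (hint : MeasureTheory.IntegrableOn G (Set.Ioi 0))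
    (hlim : Filter.Tendsto G Filter.atTop (nhds 0)) :
    ∀ x : ℝ, 0 < x → 0 < ∫ t in Set.Ioi (0 : ℝ), G t * Real.sin (x * t) :=
  sine_transform_pos_general G hanti hint
end

section
/- Write Φ(t) = ∑_{n=1}^{∞} aₙ(t) with aₙ(t) := π n² (2π n² e^{4t} − 3)·exp(5t − π n² e^{4t}). Then: (i) for each n ≥ 1, aₙ(t) > 0 for all t ≥ 0, and hence Φ(t) > 0 for all t ≥ 0; (ii) Φ is an even function on ℝ, i.e. Φ(−t) = Φ(t) for all t ∈ ℝ; and (iii) Φ′(t) < 0 for all t > 0. -/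
/-- The `n`-th summand of the Jacobi theta kernel:
`aₙ(t) := π n² (2π n² e^{4t} − 3)·exp(5t − π n² e^{4t})`. -/
noncomputable def jacobiA (n : ℕ) (t : ℝ) : ℝ :=
  Real.pi * (n : ℝ) ^ 2 * (2 * Real.pi * (n : ℝ) ^ 2 * Real.exp (4 * t) - 3) *
    Real.exp (5 * t - Real.pi * (n : ℝ) ^ 2 * Real.exp (4 * t))

/-- The Jacobi theta kernel `Φ(t) := ∑_{n=1}^∞ aₙ(t)`. -/
noncomputable def jacobiPhi (t : ℝ) : ℝ := ∑' n : ℕ, jacobiA (n + 1) t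

/-!
With `u = πn²e^{4t}` every summand `aₙ(t)` has the form `P(u)·e^{t-u}` for a polynomial `P`, and
`d/dt` acts on these by `P ↦ 4XP' + (1 - 4X)P`; uniform Gaussian decay in `n` on compact
`t`-intervals justifies termwise differentiation.

Evenness: for `θ(x) = ∑_{n ∈ ℤ} e^{-πn²x}` and `W(t) = e^t θ(e^{4t})`, Jacobi's transformation
`θ(1/x) = √x θ(x)` makes `W` even, and `Φ = (W'' - W)/16`.

Monotonicity: for `t ≥ 1/100` every summand of `Φ'` is negative. On `[0, 1/100]` the `n = 1`
summand of `Φ''` outweighs all the others, so `Φ'` decreases there from `Φ'(0) = 0`, which holds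
because `Φ'` is odd.
-/

open Real Polynomial

lemma Function.Even.deriv {𝕜 F : Type*} [NontriviallyNormedField 𝕜] [NormedAddCommGroup F]
    [NormedSpace 𝕜 F] {f : 𝕜 → F} (hf : f.Even) : (deriv f).Odd := fun x => by
  simpa [funext hf] using deriv_comp_neg f (-x)

lemma Function.Odd.deriv {𝕜 F : Type*} [NontriviallyNormedField 𝕜] [NormedAddCommGroup F]
    [NormedSpace 𝕜 F] {f : 𝕜 → F} (hf : f.Odd) : (deriv f).Even := fun x => by
  have h := deriv_comp_neg f (-x)
  rwa [show (fun y => f (-y)) = -f from funext hf, deriv.neg, neg_neg, neg_inj] at h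

namespace JacobiKernel

noncomputable def thetaArg (n : ℕ) (t : ℝ) : ℝ := π * n ^ 2 * exp (4 * t)

noncomputable def thetaTerm (P : ℝ[X]) (n : ℕ) (t : ℝ) : ℝ :=
  P.eval (thetaArg n t) * exp (t - thetaArg n t)

noncomputable def thetaSeries (P : ℝ[X]) (t : ℝ) : ℝ := ∑' n : ℕ, thetaTerm P (n + 1) t

/-- With `u = thetaArg n t`, `d/dt (P(u) e^{t-u}) = (4u P'(u) + (1 - 4u) P(u)) e^{t-u}` as
`du/dt = 4u`. -/
noncomputable def thetaDeriv (P : ℝ[X]) : ℝ[X] := 4 * X * derivative P + (1 - 4 * X) * P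

lemma thetaArg_nonneg (n : ℕ) (t : ℝ) : 0 ≤ thetaArg n t := by
  unfold thetaArg; positivity

lemma hasDerivAt_thetaArg (n : ℕ) (t : ℝ) : HasDerivAt (thetaArg n) (4 * thetaArg n t) t := by
  unfold thetaArg
  exact (((hasDerivAt_id' t).const_mul 4).exp.const_mul (π * n ^ 2)).congr_deriv (by ring)

lemma hasDerivAt_thetaTerm (P : ℝ[X]) (n : ℕ) (t : ℝ) :
    HasDerivAt (thetaTerm P n) (thetaTerm (thetaDeriv P) n t) t := by
  have hu := hasDerivAt_thetaArg n t
  unfold thetaTerm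
  refine (((P.hasDerivAt _).comp t hu).mul ((hasDerivAt_id' t).sub hu).exp).congr_deriv ?_
  simp only [thetaDeriv, eval_add, eval_mul, eval_sub, eval_X, eval_one, eval_ofNat,
    Pi.sub_apply, Function.comp_apply]
  ring

lemma exists_abs_eval_le_mul_exp (P : ℝ[X]) :
    ∃ C, ∀ x, 0 ≤ x → |P.eval x| ≤ C * exp (x / 2) := by
  induction P using Polynomial.induction_on' with
  | add P Q hP hQ =>
    obtain ⟨C, hC⟩ := hP
    obtain ⟨D, hD⟩ := hQ
    refine ⟨C + D, fun x hx => ?_⟩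
    rw [eval_add, add_mul]
    exact (abs_add_le _ _).trans (add_le_add (hC x hx) (hD x hx))
  | monomial k a =>
    refine ⟨|a| * (2 ^ k * k.factorial), fun x hx => ?_⟩
    have h := pow_div_factorial_le_exp (x / 2) (by positivity) k
    rw [div_pow, div_div, div_le_iff₀ (by positivity)] at h
    rw [eval_monomial, abs_mul, abs_pow, abs_of_nonneg hx, mul_assoc]
    gcongr
    linarith

lemma exists_summable_bound_thetaTerm (P : ℝ[X]) (a b : ℝ) :
    ∃ B : ℕ → ℝ, Summable B ∧ ∀ n t, a ≤ t → t ≤ b → |thetaTerm P n t| ≤ B n := by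
  obtain ⟨C, hC⟩ := exists_abs_eval_le_mul_exp P
  set r := exp (-(π * exp (4 * a)) / 2)
  have hr : r < 1 := exp_lt_one_iff.2 (by have := exp_pos (4 * a); nlinarith [pi_pos])
  refine ⟨fun n => C * exp b * r ^ n,
    (summable_geometric_of_lt_one (exp_pos _).le hr).mul_left _, fun n t hat htb => ?_⟩
  have hC0 : 0 ≤ C := by simpa using (abs_nonneg _).trans (hC 0 le_rfl)
  have hu : π * n * exp (4 * a) ≤ thetaArg n t := by
    unfold thetaArg
    have hn : (n : ℝ) ≤ n ^ 2 := by exact_mod_cast Nat.le_self_pow two_ne_zero n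
    have := exp_le_exp.2 (show 4 * a ≤ 4 * t by linarith)
    gcongr
  calc |thetaTerm P n t|
      ≤ C * exp (thetaArg n t / 2) * exp (t - thetaArg n t) := by
        rw [thetaTerm, abs_mul, abs_of_pos (exp_pos _)]
        gcongr
        exact hC _ (thetaArg_nonneg n t)
    _ = C * exp (t - thetaArg n t / 2) := by rw [mul_assoc, ← exp_add]; ring_nf
    _ ≤ C * exp (b + n * (-(π * exp (4 * a)) / 2)) := by gcongr; nlinarith
    _ = C * exp b * r ^ n := by rw [exp_add, exp_nat_mul, mul_assoc]

lemma summable_thetaTerm (P : ℝ[X]) (t : ℝ) : Summable fun n => thetaTerm P (n + 1) t := by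
  obtain ⟨B, hB, hPB⟩ := exists_summable_bound_thetaTerm P t t
  exact (summable_nat_add_iff 1).2
    (hB.of_norm_bounded (f := fun n => thetaTerm P n t) fun n => hPB n t le_rfl le_rfl)

lemma hasDerivAt_thetaSeries (P : ℝ[X]) (t : ℝ) :
    HasDerivAt (thetaSeries P) (thetaSeries (thetaDeriv P) t) t := by
  obtain ⟨B, hB, hPB⟩ := exists_summable_bound_thetaTerm (thetaDeriv P) (t - 1) (t + 1)
  have ht : t ∈ Set.Ioo (t - 1) (t + 1) := ⟨by linarith, by linarith⟩
  exact hasDerivAt_tsum_of_isPreconnected ((summable_nat_add_iff 1).2 hB) isOpen_Ioo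
    isPreconnected_Ioo (fun n y _ => hasDerivAt_thetaTerm P (n + 1) y)
    (fun n y hy => hPB (n + 1) y hy.1.le hy.2.le) ht (summable_thetaTerm P t) ht

lemma thetaSeries_add (P Q : ℝ[X]) (t : ℝ) :
    thetaSeries (P + Q) t = thetaSeries P t + thetaSeries Q t := by
  simp only [thetaSeries, thetaTerm, eval_add, add_mul]
  exact (summable_thetaTerm P t).tsum_add (summable_thetaTerm Q t)

lemma thetaSeries_C_mul (c : ℝ) (P : ℝ[X]) (t : ℝ) :
    thetaSeries (C c * P) t = c * thetaSeries P t := by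
  simp only [thetaSeries, thetaTerm, eval_mul, eval_C, mul_assoc, tsum_mul_left]

lemma continuous_thetaSeries (P : ℝ[X]) : Continuous (thetaSeries P) :=
  continuous_iff_continuousAt.2 fun t => (hasDerivAt_thetaSeries P t).continuousAt

noncomputable def theta (x : ℝ) : ℝ := ∑' n : ℤ, exp (-π * x * n ^ 2)

lemma theta_inv {x : ℝ} (hx : 0 < x) : theta x⁻¹ = √x * theta x := by
  rw [theta, tsum_exp_neg_mul_int_sq (inv_pos.2 hx), inv_rpow hx.le, ← sqrt_eq_rpow, one_div,
    inv_inv]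
  simp only [div_inv_eq_mul, theta]

lemma thetaTerm_one (n : ℕ) (t : ℝ) :
    thetaTerm 1 n t = exp t * exp (-π * exp (4 * t) * n ^ 2) := by
  rw [thetaTerm, eval_one, one_mul, ← exp_add, thetaArg]
  ring_nf

lemma theta_eq_one_add_two_mul_tsum {x : ℝ} (hx : 0 < x) :
    theta x = 1 + 2 * ∑' n : ℕ, exp (-π * x * (n + 1 : ℕ) ^ 2) := by
  set f : ℤ → ℝ := fun n => exp (-π * x * n ^ 2)
  have hf : f.Even := fun n => by simp only [f, Int.cast_neg, neg_sq]
  have hsucc : Summable fun n : ℕ => f (n + 1 : ℕ) := by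
    have h := (summable_thetaTerm 1 (log x / 4)).mul_left (exp (-(log x / 4)))
    refine h.congr fun n => ?_
    rw [thetaTerm_one, ← mul_assoc, ← exp_add, neg_add_cancel, exp_zero, one_mul,
      show 4 * (log x / 4) = log x by ring, exp_log hx]
    simp [f]
  have hnat : Summable fun n : ℕ => f n := (summable_nat_add_iff 1).1 hsucc
  have hint : Summable f :=
    summable_int_iff_summable_nat_and_neg.2 ⟨hnat, by simpa only [hf _] using hnat⟩
  rw [theta, tsum_int_eq_zero_add_two_mul_tsum_pnat hf hint,
    tsum_pnat_eq_tsum_succ (f := fun n : ℕ => f n)]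
  simp [f]

noncomputable def scaledTheta (t : ℝ) : ℝ := exp t * theta (exp (4 * t))

lemma scaledTheta_even : scaledTheta.Even := fun t => by
  have h2 : √(exp (4 * t)) = exp (2 * t) := by
    rw [show 4 * t = 2 * t + 2 * t by ring, exp_add, sqrt_mul_self (exp_pos _).le]
  rw [scaledTheta, scaledTheta, show 4 * -t = -(4 * t) by ring, exp_neg (4 * t),
    theta_inv (exp_pos _), h2, ← mul_assoc, ← exp_add]
  ring_nf

lemma scaledTheta_eq (t : ℝ) : scaledTheta t = exp t + 2 * thetaSeries 1 t := by
  rw [scaledTheta, theta_eq_one_add_two_mul_tsum (exp_pos _), thetaSeries]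
  simp only [thetaTerm_one, tsum_mul_left]
  ring

lemma hasDerivAt_exp_add_two_mul_thetaSeries (P : ℝ[X]) (t : ℝ) :
    HasDerivAt (fun t => exp t + 2 * thetaSeries P t)
      (exp t + 2 * thetaSeries (thetaDeriv P) t) t :=
  (hasDerivAt_exp t).add ((hasDerivAt_thetaSeries P t).const_mul 2)

/-- With `u = thetaArg n t`, `aₙ(t) = (2u² - 3u) e^{t-u}` since `π n² e^{5t} = u e^t`. -/
noncomputable def kernelPoly : ℝ[X] := 2 * X ^ 2 - 3 * X

lemma jacobiA_eq_thetaTerm (n : ℕ) (t : ℝ) : jacobiA n t = thetaTerm kernelPoly n t := by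
  rw [jacobiA, thetaTerm, thetaArg, show 5 * t = 4 * t + t by ring, add_sub_assoc, exp_add]
  simp only [kernelPoly, eval_sub, eval_mul, eval_pow, eval_X, eval_ofNat]
  ring

lemma jacobiPhi_eq_thetaSeries : jacobiPhi = thetaSeries kernelPoly :=
  funext fun t => tsum_congr fun n => jacobiA_eq_thetaTerm (n + 1) t

lemma thetaDeriv_thetaDeriv_one : thetaDeriv (thetaDeriv 1) = C 8 * kernelPoly + 1 := by
  simp only [thetaDeriv, kernelPoly, C_ofNat, derivative_one, mul_zero, mul_one, zero_add,
    derivative_sub, derivative_mul, derivative_ofNat, derivative_X]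
  ring

lemma deriv_deriv_scaledTheta (t : ℝ) :
    deriv (deriv scaledTheta) t = scaledTheta t + 16 * jacobiPhi t := by
  have hW : scaledTheta = fun t => exp t + 2 * thetaSeries 1 t := funext scaledTheta_eq
  have hW' : deriv scaledTheta = fun t => exp t + 2 * thetaSeries (thetaDeriv 1) t := by
    rw [hW]; exact funext fun t => (hasDerivAt_exp_add_two_mul_thetaSeries 1 t).deriv
  rw [hW', (hasDerivAt_exp_add_two_mul_thetaSeries _ t).deriv, thetaDeriv_thetaDeriv_one,
    thetaSeries_add, thetaSeries_C_mul, scaledTheta_eq, jacobiPhi_eq_thetaSeries]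
  ring

lemma pi_mul_exp_le_thetaArg {n : ℕ} (hn : 1 ≤ n) (t : ℝ) : π * exp (4 * t) ≤ thetaArg n t := by
  have hn2 : (1 : ℝ) ≤ n ^ 2 := by exact_mod_cast Nat.one_le_pow 2 n hn
  have := mul_le_mul_of_nonneg_left hn2 (by positivity : 0 ≤ π * exp (4 * t))
  unfold thetaArg
  linarith

lemma eval_thetaDeriv_kernelPoly (u : ℝ) :
    (thetaDeriv kernelPoly).eval u = u * (-8 * u ^ 2 + 30 * u - 15) := by
  simp only [thetaDeriv, kernelPoly, derivative_sub, derivative_mul, derivative_ofNat,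
    derivative_X_pow, derivative_X, eval_add, eval_sub, eval_mul, eval_pow, eval_X, eval_one,
    eval_ofNat, eval_C, eval_zero]
  ring

lemma eval_thetaDeriv_thetaDeriv_kernelPoly (u : ℝ) :
    (thetaDeriv (thetaDeriv kernelPoly)).eval u =
      u * (32 * u ^ 3 - 224 * u ^ 2 + 330 * u - 75) := by
  simp only [thetaDeriv, kernelPoly, derivative_add, derivative_sub, derivative_mul,
    derivative_ofNat, derivative_X_pow, derivative_X, derivative_one, derivative_zero,
    derivative_C, eval_add, eval_sub, eval_mul, eval_pow, eval_X, eval_one, eval_ofNat, eval_C,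
    eval_zero]
  ring

lemma exp_three_gt : 20 < exp 3 := by
  rw [show (3 : ℝ) = (3 : ℕ) by norm_num, ← exp_one_pow]
  exact lt_trans (by norm_num) (pow_lt_pow_left₀ exp_one_gt_d9 (by norm_num) three_ne_zero)

lemma exp_four_gt : 54 < exp 4 := by
  rw [show (4 : ℝ) = (4 : ℕ) by norm_num, ← exp_one_pow]
  exact lt_trans (by norm_num) (pow_lt_pow_left₀ exp_one_gt_d9 (by norm_num) four_ne_zero)

lemma exp_four_lt : exp 4 < 55 := by
  rw [show (4 : ℝ) = (4 : ℕ) by norm_num, ← exp_one_pow]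
  exact lt_trans (pow_lt_pow_left₀ exp_one_lt_d9 (exp_pos 1).le four_ne_zero) (by norm_num)

/-- From `x/8 ≤ e^{x/8 - 1}`, nearly sharp; the factorial bound `(x/2)⁴/4! ≤ e^{x/2}` only gives
`384`, too weak for the tail of `Φ''`. -/
lemma pow_four_le_mul_exp_half {x : ℝ} (hx : 0 ≤ x) : x ^ 4 ≤ 78 * exp (x / 2) := by
  have h : x ≤ 8 * exp (x / 8 - 1) := by linarith [add_one_le_exp (x / 8 - 1)]
  calc x ^ 4 ≤ (8 * exp (x / 8 - 1)) ^ 4 := pow_le_pow_left₀ hx h 4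
    _ = 4096 * exp (x / 2) / exp 4 := by
        rw [mul_pow, ← exp_nat_mul, eq_div_iff (exp_pos 4).ne', mul_assoc, ← exp_add]
        ring_nf
    _ ≤ 78 * exp (x / 2) := by
        rw [div_le_iff₀ (exp_pos 4)]
        nlinarith [exp_four_gt, exp_pos (x / 2)]

lemma thetaTerm_thetaDeriv_thetaDeriv_kernelPoly_one_le {c : ℝ} (h0 : 0 ≤ c)
    (h1 : c ≤ 1 / 100) :
    thetaTerm (thetaDeriv (thetaDeriv kernelPoly)) 1 c ≤ -14 := by
  have hu : thetaArg 1 c = π * exp (4 * c) := by simp [thetaArg]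
  have he1 : 1 ≤ exp (4 * c) := one_le_exp (by linarith)
  have he2 : exp (4 * c) ≤ 1.08 := by
    have := abs_exp_sub_one_le (x := 4 * c) (by rw [abs_le]; constructor <;> linarith)
    rw [abs_of_nonneg (by linarith), abs_of_nonneg (by linarith)] at this
    linarith
  rw [thetaTerm, eval_thetaDeriv_thetaDeriv_kernelPoly]
  set u := thetaArg 1 c
  have hu1 : 3.14 ≤ u := by nlinarith [pi_gt_d2]
  have hu2 : u ≤ 4 := by nlinarith [pi_lt_d2]
  have hP : u * (32 * u ^ 3 - 224 * u ^ 2 + 330 * u - 75) ≤ -785 := by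
    nlinarith [mul_nonneg (sub_nonneg.2 hu1) (sub_nonneg.2 hu2), sq_nonneg (u - 3.75)]
  have hE : 1 / 55 ≤ exp (c - u) := by
    calc 1 / 55 ≤ exp (-4) := by
          rw [exp_neg, one_div]; exact inv_anti₀ (exp_pos 4) exp_four_lt.le
      _ ≤ exp (c - u) := exp_le_exp.2 (by linarith)
  nlinarith

lemma thetaTerm_thetaDeriv_thetaDeriv_kernelPoly_le {n : ℕ} (hn : 2 ≤ n) {c : ℝ} (h0 : 0 ≤ c)
    (h1 : c ≤ 1 / 100) :
    thetaTerm (thetaDeriv (thetaDeriv kernelPoly)) n c ≤ 2496 * exp (-3) ^ n := by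
  have hn' : (2 : ℝ) ≤ n := by exact_mod_cast hn
  have hu : π * n ^ 2 ≤ thetaArg n c := by
    have := mul_le_mul_of_nonneg_left (one_le_exp (by linarith : 0 ≤ 4 * c))
      (by positivity : 0 ≤ π * n ^ 2)
    rw [thetaArg]; linarith
  rw [thetaTerm, eval_thetaDeriv_thetaDeriv_kernelPoly]
  set u := thetaArg n c
  have hu12 : 12 ≤ u := by nlinarith [pi_gt_three]
  have hP : u * (32 * u ^ 3 - 224 * u ^ 2 + 330 * u - 75) ≤ 32 * u ^ 4 := by nlinarith
  have hexp : c - u / 2 ≤ n * (-3) := by nlinarith [pi_gt_d2]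
  calc u * (32 * u ^ 3 - 224 * u ^ 2 + 330 * u - 75) * exp (c - u)
      ≤ 32 * (78 * exp (u / 2)) * exp (c - u) := by
        refine mul_le_mul_of_nonneg_right (hP.trans ?_) (exp_pos _).le
        linarith [pow_four_le_mul_exp_half (by linarith : 0 ≤ u)]
    _ = 2496 * exp (c - u / 2) := by rw [mul_assoc, mul_assoc, ← exp_add]; ring_nf
    _ ≤ 2496 * exp (-3) ^ n := by rw [← exp_nat_mul]; gcongr

lemma tsum_thetaTerm_thetaDeriv_thetaDeriv_kernelPoly_le {c : ℝ} (h0 : 0 ≤ c)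
    (h1 : c ≤ 1 / 100) :
    ∑' n : ℕ, thetaTerm (thetaDeriv (thetaDeriv kernelPoly)) (n + 2) c ≤ 7 := by
  have hr : exp (-3) < 1 / 20 := by
    rw [exp_neg, one_div]; exact inv_strictAnti₀ (by norm_num) exp_three_gt
  have hr0 := exp_pos (-3)
  calc ∑' n : ℕ, thetaTerm (thetaDeriv (thetaDeriv kernelPoly)) (n + 2) c
      ≤ ∑' n : ℕ, 2496 * exp (-3) ^ 2 * exp (-3) ^ n := by
        refine Summable.tsum_le_tsum (fun n => ?_) ((summable_nat_add_iff 1).2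
          (summable_thetaTerm _ c)) ((summable_geometric_of_lt_one hr0.le (by linarith)).mul_left _)
        rw [mul_assoc, ← pow_add, add_comm]
        exact thetaTerm_thetaDeriv_thetaDeriv_kernelPoly_le (by omega) h0 h1
    _ = 2496 * exp (-3) ^ 2 * (1 - exp (-3))⁻¹ := by
        rw [tsum_mul_left, tsum_geometric_of_lt_one hr0.le (by linarith)]
    _ ≤ 7 := by
        rw [mul_inv_le_iff₀ (by linarith)]
        nlinarith

lemma thetaSeries_thetaDeriv_thetaDeriv_kernelPoly_neg {c : ℝ} (h0 : 0 ≤ c)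
    (h1 : c ≤ 1 / 100) : thetaSeries (thetaDeriv (thetaDeriv kernelPoly)) c < 0 := by
  rw [thetaSeries, (summable_thetaTerm _ c).tsum_eq_zero_add]
  linarith [thetaTerm_thetaDeriv_thetaDeriv_kernelPoly_one_le h0 h1,
    tsum_thetaTerm_thetaDeriv_thetaDeriv_kernelPoly_le h0 h1]

lemma thetaSeries_thetaDeriv_kernelPoly_neg {t : ℝ} (ht : 1 / 100 ≤ t) :
    thetaSeries (thetaDeriv kernelPoly) t < 0 := by
  have hterm : ∀ n : ℕ, thetaTerm (thetaDeriv kernelPoly) (n + 1) t < 0 := fun n => by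
    have hu := pi_mul_exp_le_thetaArg (Nat.le_add_left 1 n) t
    have he : 1.04 ≤ exp (4 * t) := by linarith [add_one_le_exp (4 * t)]
    rw [thetaTerm, eval_thetaDeriv_kernelPoly]
    set u := thetaArg (n + 1) t
    have hu' : 3.2 ≤ u := by nlinarith [pi_gt_d2]
    have hq : -8 * u ^ 2 + 30 * u - 15 < 0 := by nlinarith
    exact mul_neg_of_neg_of_pos (mul_neg_of_pos_of_neg (by linarith) hq) (exp_pos _)
  simpa [thetaSeries] using
    (summable_thetaTerm _ t).tsum_lt_tsum (g := 0) (fun n => (hterm n).le) (hterm 0) summable_zero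

end JacobiKernel

open JacobiKernel

lemma jacobiA_pos {n : ℕ} (hn : 1 ≤ n) {t : ℝ} (ht : 0 ≤ t) : 0 < jacobiA n t := by
  have hn2 : (1 : ℝ) ≤ n ^ 2 := by exact_mod_cast Nat.one_le_pow 2 n hn
  have hE : 1 ≤ (n : ℝ) ^ 2 * exp (4 * t) :=
    one_le_mul_of_one_le_of_one_le hn2 (one_le_exp (by linarith))
  unfold jacobiA
  have h : 0 < 2 * π * n ^ 2 * exp (4 * t) - 3 := by nlinarith [pi_gt_three]
  positivity

lemma jacobiPhi_pos {t : ℝ} (ht : 0 ≤ t) : 0 < jacobiPhi t := by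
  have hs : Summable fun n : ℕ => jacobiA (n + 1) t := by
    simpa only [jacobiA_eq_thetaTerm] using summable_thetaTerm kernelPoly t
  exact hs.tsum_pos (fun n => (jacobiA_pos (Nat.le_add_left 1 n) ht).le) 0
    (jacobiA_pos le_rfl ht)

lemma jacobiPhi_even : jacobiPhi.Even := fun t => by
  have h := scaledTheta_even.deriv.deriv t
  rw [deriv_deriv_scaledTheta, deriv_deriv_scaledTheta, scaledTheta_even t] at h
  linarith

lemma deriv_jacobiPhi : deriv jacobiPhi = thetaSeries (thetaDeriv kernelPoly) := by
  rw [jacobiPhi_eq_thetaSeries]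
  exact funext fun t => (hasDerivAt_thetaSeries _ t).deriv

lemma deriv_jacobiPhi_neg {t : ℝ} (ht : 0 < t) : deriv jacobiPhi t < 0 := by
  rw [deriv_jacobiPhi]
  rcases le_or_gt (1 / 100) t with hlarge | hsmall
  · exact thetaSeries_thetaDeriv_kernelPoly_neg hlarge
  have hanti : StrictAntiOn (thetaSeries (thetaDeriv kernelPoly)) (Set.Icc 0 (1 / 100)) := by
    refine strictAntiOn_of_deriv_neg (convex_Icc _ _) (continuous_thetaSeries _).continuousOn
      fun x hx => ?_
    rw [interior_Icc] at hx
    rw [(hasDerivAt_thetaSeries _ x).deriv]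
    exact thetaSeries_thetaDeriv_thetaDeriv_kernelPoly_neg hx.1.le hx.2.le
  have hzero : thetaSeries (thetaDeriv kernelPoly) 0 = 0 := by
    rw [← deriv_jacobiPhi]; exact jacobiPhi_even.deriv.map_zero
  exact hzero ▸ hanti ⟨le_rfl, by norm_num⟩ ⟨ht.le, hsmall.le⟩ ht

/-- **Theorem 4.1 (i), (iii), (v).** For the Jacobi theta kernel `Φ(t) = ∑ₙ aₙ(t)`:
(i) each `aₙ(t) > 0` for `t ≥ 0`, hence `Φ(t) > 0` for `t ≥ 0`;
(ii) `Φ` is even; and (iii) `Φ′(t) < 0` for all `t > 0`. -/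
theorem thm_4_1 :
    (∀ n : ℕ, 1 ≤ n → ∀ t : ℝ, 0 ≤ t → 0 < jacobiA n t) ∧
    (∀ t : ℝ, 0 ≤ t → 0 < jacobiPhi t) ∧
    (∀ t : ℝ, jacobiPhi (-t) = jacobiPhi t) ∧
    (∀ t : ℝ, 0 < t → deriv jacobiPhi t < 0) :=
  ⟨fun _ hn _ ht => jacobiA_pos hn ht, fun _ ht => jacobiPhi_pos ht, jacobiPhi_even,
    fun _ ht => deriv_jacobiPhi_neg ht⟩
end
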